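/- Let W be a basic localizer on Cat. Let F: A → Cat be a functor (pseudo-functor) on a small category A, let G: A → Cat be another such functor, and let η: F ⟹ G be a natural transformation such that for every object a of A the functor η_a : F(a) → G(a) is in W. Then the induced functor ∫η : ∫F → ∫G between the Grothendieck constructions is in W. -/

import Mathlib

open CategoryTheory CategoryTheory.Limits

universe u

/-- A class of morphisms is weakly saturated if it contains identities,
satisfies 2-out-of-3, and satisfies (WS3). -/
structure IsWeaklySaturated {C : Type*} [Category C] (W : MorphismProperty C) : Prop where
  id_mem : ∀ X : C, W (𝟙 X)
  comp_mem : ∀ ⦃X Y Z : C⦄ (f : X ⟶ Y) (g : Y ⟶ Z), W f → W g → W (f ≫ g)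
  of_comp_left : ∀ ⦃X Y Z : C⦄ (f : X ⟶ Y) (g : Y ⟶ Z), W f → W (f ≫ g) → W g
  of_comp_right : ∀ ⦃X Y Z : C⦄ (f : X ⟶ Y) (g : Y ⟶ Z), W g → W (f ≫ g) → W f
  ws3 : ∀ ⦃X Y : C⦄ (p : Y ⟶ X) (s : X ⟶ Y), s ≫ p = 𝟙 X → W (p ≫ s) → W p

/-- The terminal category, as an object of `Cat`. -/
abbrev Cat.pt : Cat.{u, u} := Cat.of (Discrete PUnit.{u + 1})

/-- A basic localizer (Grothendieck's « localisateur fondamental ») on `Cat`: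
(L1) weak saturation, (L2) categories with a terminal object are aspherical,
(L3) locality over a base via comma categories. -/
structure IsBasicLocalizer (W : MorphismProperty Cat.{u, u}) : Prop where
  weaklySaturated : IsWeaklySaturated W
  terminal : ∀ (I : Cat.{u, u}) [HasTerminal I],
    W (X := I) (Y := Cat.pt.{u}) (Functor.star I).toCatHom
  locality : ∀ ⦃I J K : Cat.{u, u}⦄ (w : I ⟶ J) (v : J ⟶ K),
    (∀ k : K,
      W (X := Cat.of (Comma ((w.toFunctor : ↥I ⥤ ↥J) ⋙ (v.toFunctor : ↥J ⥤ ↥K)) (Functor.fromPUnit.{u} k)))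
        (Y := Cat.of (Comma (v.toFunctor : ↥J ⥤ ↥K) (Functor.fromPUnit.{u} k)))
        ((Comma.preLeft (w.toFunctor : ↥I ⥤ ↥J) (v.toFunctor : ↥J ⥤ ↥K) (Functor.fromPUnit.{u} k)).toCatHom)) →
    W w

/-!
By locality (L3) over `A`, applied to `∫η` and the projection `∫G ⥤ A`, it suffices that each
induced functor `∫F / a ⥤ ∫G / a` is in `W`. Transport along the structure map,
`((b, x), f : b ⟶ a) ↦ H(f)(x)`, is a functor `∫H / a ⥤ H(a)` whose comma categories have the
terminal objects `((a, y), 𝟙 a)`, so it lies in `W`. By naturality of `η` it intertwines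
`∫F / a ⥤ ∫G / a` with `η_a`, and 2-out-of-3 concludes.
-/

universe w w'

namespace CategoryTheory

/-- `CostructuredArrow.mkIdTerminal` only covers the unit category `Discrete PUnit.{1}`. -/
def Comma.isTerminalIdFromPUnit {J : Type*} [Category* J] (k : J) :
    IsTerminal (⟨k, ⟨⟨⟩⟩, 𝟙 k⟩ : Comma (𝟭 J) (Functor.fromPUnit.{w} k)) :=
  IsTerminal.ofUniqueHom (fun Y => ⟨Y.hom, 𝟙 _, by simp⟩) fun Y m =>
    Comma.hom_ext _ _ (by simpa using m.w) (Subsingleton.elim _ _)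

lemma Functor.map_eqToHom_comp_heq {C D D' E : Type*} [Category* C] [Category* D] [Category* D']
    [Category* E] (S : C ⥤ D) (P : D ⥤ E) (R : C ⥤ D') (Q : D' ⥤ E) (h : S ⋙ P = R ⋙ Q)
    {x y : C} (g : x ⟶ y) {u : D} (p : u = S.obj x) {v : D'} (q : v = R.obj x) :
    P.map (eqToHom p ≫ S.map g) ≍ Q.map (eqToHom q ≫ R.map g) := by
  simp only [Functor.map_comp, eqToHom_map, eqToHom_comp_heq_iff, heq_eqToHom_comp_iff]
  exact (conj_eqToHom_iff_heq' _ _ _ _).mp (Functor.congr_hom h g)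

lemma Functor.map_id_toFunctor_obj {A : Type*} [Category* A] (H : A ⥤ Cat) (a : A) (y : H.obj a) :
    (H.map (𝟙 a)).toFunctor.obj y = y := by
  rw [H.map_id]; rfl

/-- Shaped as the commutativity condition of a morphism into the terminal object below. -/
lemma Functor.conj_map_id_toFunctor_map_eq_iff {A : Type*} [Category* A] {H : A ⥤ Cat} {a : A}
    {x y z : H.obj a} (g : x ⟶ y) (g' : z ⟶ y) (p : x = (H.map (𝟙 a)).toFunctor.obj z) :
    (eqToHom p ≫ (H.map (𝟙 a)).toFunctor.map g') ≫ eqToHom (H.map_id_toFunctor_obj a y) =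
        g ≫ 𝟙 y ↔
      eqToHom (p.trans (H.map_id_toFunctor_obj a z)) ≫ g' = g := by
  rw [Functor.congr_hom (congrArg Cat.Hom.toFunctor (H.map_id a)) g']
  simp

namespace Grothendieck

variable {A : Type*} [Category* A] {H : A ⥤ Cat} {a : A}

/-- `X.hom`, typed with source `X.left.base` rather than `(forget H).obj X.left`: only in this
form do rewrites with lemmas about `H.map` typecheck. -/
def commaHom (X : Comma (forget H) (Functor.fromPUnit.{w} a)) : X.left.base ⟶ a := X.hom

lemma base_comp_commaHom {X Y : Comma (forget H) (Functor.fromPUnit.{w} a)} (φ : X ⟶ Y) :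
    φ.left.base ≫ commaHom Y = commaHom X :=
  φ.w.trans (Category.comp_id _)

lemma map_commaHom {X Y : Comma (forget H) (Functor.fromPUnit.{w} a)} (φ : X ⟶ Y) :
    H.map (commaHom X) = H.map φ.left.base ≫ H.map (commaHom Y) := by
  rw [← base_comp_commaHom φ, H.map_comp]

variable (H a) in
def commaForgetToFiber : Comma (forget H) (Functor.fromPUnit.{w} a) ⥤ H.obj a where
  obj X := (H.map (commaHom X)).toFunctor.obj X.left.fiber
  map {X Y} φ :=
    eqToHom (by rw [map_commaHom φ]; rfl) ≫ (H.map (commaHom Y)).toFunctor.map φ.left.fiber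
  map_id X := by
    simp only [Comma.id_left, id_fiber]
    rw [eqToHom_map, eqToHom_trans, eqToHom_refl]
  map_comp {X Y Z} φ ψ := by
    have key := Functor.congr_hom (congrArg Cat.Hom.toFunctor (map_commaHom ψ)) φ.left.fiber
    simp only [Cat.Hom.comp_toFunctor, Functor.comp_map] at key
    simp only [Comma.comp_left, comp_fiber, Functor.map_comp, eqToHom_map, key, Category.assoc]
    rw [eqToHom_trans_assoc, eqToHom_trans_assoc, eqToHom_trans_assoc, eqToHom_refl,
      Category.id_comp]

def isTerminalCommaForgetToFiber (y : H.obj a) :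
    IsTerminal (⟨⟨⟨a, y⟩, ⟨⟨⟩⟩, 𝟙 a⟩, ⟨⟨⟩⟩, eqToHom (H.map_id_toFunctor_obj a y)⟩ :
      Comma (commaForgetToFiber H a) (Functor.fromPUnit.{w'} y)) := by
  refine IsTerminal.ofUniqueHom (fun X => ⟨⟨⟨commaHom X.left, X.hom⟩, 𝟙 _,
    (Category.comp_id _).trans (Category.comp_id _).symm⟩, 𝟙 _,
    (Functor.conj_map_id_toFunctor_map_eq_iff _ _ _).mpr (Category.id_comp _)⟩) fun X m => ?_
  have hbase : m.left.left.base = commaHom X.left :=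
    (Category.comp_id _).symm.trans (base_comp_commaHom m.left)
  exact Comma.hom_ext _ _ (Comma.hom_ext _ _
    (Grothendieck.ext _ _ hbase ((Functor.conj_map_id_toFunctor_map_eq_iff _ _ _).mp m.w)) rfl) rfl

variable {F G : A ⥤ Cat}

/-- `Comma.preLeft (map η) (forget G)`, with its domain `Comma (map η ⋙ forget G) _` written as
the definitionally equal `Comma (forget F) _`. -/
def commaMap (η : F ⟶ G) (a : A) :
    Comma (forget F) (Functor.fromPUnit.{w} a) ⥤ Comma (forget G) (Functor.fromPUnit.{w} a) :=
  Comma.preLeft (map η) (forget G) (Functor.fromPUnit.{w} a)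

lemma commaMap_comp_commaForgetToFiber (η : F ⟶ G) (a : A) :
    (commaMap η a ⋙ commaForgetToFiber G a : Comma (forget F) (Functor.fromPUnit.{w} a) ⥤ _) =
      commaForgetToFiber F a ⋙ (η.app a).toFunctor := by
  refine Functor.hext (fun X => ?_) (fun X Y φ => ?_)
  · exact (Functor.congr_obj (congrArg Cat.Hom.toFunctor (η.naturality (commaHom X)))
      X.left.fiber).symm
  · change (commaForgetToFiber G a).map ((commaMap η a).map φ) ≍
      (η.app a).toFunctor.map ((commaForgetToFiber F a).map φ)
    refine (eqToHom_comp_heq _ _).trans ?_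
    change (G.map (commaHom Y)).toFunctor.map
      ((eqToHom (η.naturality φ.left.base).symm).toNatTrans.app X.left.fiber ≫
        (η.app Y.left.base).toFunctor.map φ.left.fiber) ≍ _
    rw [Cat.eqToHom_app]
    exact Functor.map_eqToHom_comp_heq _ _ _ _
      (congrArg Cat.Hom.toFunctor (η.naturality (commaHom Y)).symm) _ _ _

end Grothendieck

end CategoryTheory

namespace IsBasicLocalizer

variable {W : MorphismProperty Cat.{u, u}}

lemma mem_of_hasTerminal (hW : IsBasicLocalizer W) {I J : Cat.{u, u}} (f : I ⟶ J)
    (hI : HasTerminal I) (hJ : HasTerminal J) : W f := by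
  refine hW.weaklySaturated.of_comp_right f (Functor.star J).toCatHom (@hW.terminal J hJ) ?_
  have : f ≫ (Functor.star J).toCatHom = (Functor.star I).toCatHom :=
    Cat.ext (Functor.punit_ext' _ _)
  exact this ▸ @hW.terminal I hI

/-- Quillen's Theorem A, for comma categories with terminal objects. -/
lemma mem_of_hasTerminal_comma (hW : IsBasicLocalizer W) {I J : Cat.{u, u}} (f : I ⟶ J)
    (h : ∀ j : J, HasTerminal (Comma f.toFunctor (Functor.fromPUnit.{u} j))) : W f :=
  hW.locality f (𝟙 J) fun j =>
    hW.mem_of_hasTerminal _ (h j) (Comma.isTerminalIdFromPUnit j).hasTerminal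

lemma commaForgetToFiber_mem (hW : IsBasicLocalizer W) {A : Type u} [Category.{u} A]
    (H : A ⥤ Cat.{u, u}) (a : A) :
    W (X := Cat.of (Comma (Grothendieck.forget H) (Functor.fromPUnit.{u} a))) (Y := H.obj a)
      (Grothendieck.commaForgetToFiber H a).toCatHom :=
  hW.mem_of_hasTerminal_comma _ fun y => (Grothendieck.isTerminalCommaForgetToFiber y).hasTerminal

lemma commaMap_mem (hW : IsBasicLocalizer W) {A : Type u} [Category.{u} A]
    {F G : A ⥤ Cat.{u, u}} (η : F ⟶ G) {a : A} (h : W (η.app a)) :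
    W (X := Cat.of (Comma (Grothendieck.forget F) (Functor.fromPUnit.{u} a)))
      (Y := Cat.of (Comma (Grothendieck.forget G) (Functor.fromPUnit.{u} a)))
      (Grothendieck.commaMap η a).toCatHom := by
  refine hW.weaklySaturated.of_comp_right _ _ (hW.commaForgetToFiber_mem G a) ?_
  change W (Grothendieck.commaMap η a ⋙ Grothendieck.commaForgetToFiber G a).toCatHom
  rw [Grothendieck.commaMap_comp_commaForgetToFiber]
  exact hW.weaklySaturated.comp_mem _ (η.app a) (hW.commaForgetToFiber_mem F a) h

end IsBasicLocalizer

/-- If a natural transformation `η : F ⟶ G` of functors `A ⥤ Cat` is pointwise in a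
basic localizer `W`, then the induced functor `∫F ⥤ ∫G` between the Grothendieck
constructions is in `W`. -/
theorem IsBasicLocalizer.grothendieck_map_mem {W : MorphismProperty Cat.{u, u}}
    (hW : IsBasicLocalizer W) {A : Cat.{u, u}} {F G : ↥A ⥤ Cat.{u, u}}
    (η : F ⟶ G) (h : ∀ a : ↥A, W (η.app a)) :
    W (X := Cat.of (Grothendieck F)) (Y := Cat.of (Grothendieck G))
      (Grothendieck.map η).toCatHom :=
  hW.locality (K := A) (Grothendieck.map η).toCatHom (Grothendieck.forget G).toCatHom
    fun a => hW.commaMap_mem η (h a)
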